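/- For 0 < x < π and 0 < t < 1, set Î(x,t) = log( sin(x(1−t)/2)·sin(x(1+t)/2) / sin(xt/2)² ). Then: (1) for each fixed x ∈ (0, π), the function t ↦ Î(x,t) is continuous and strictly decreasing on (0,1), with Î(x,t) → +∞ as t → 0⁺ and Î(x,t) → −∞ as t → 1⁻; (2) consequently, for each x ∈ (0,π) there is a unique r_x ∈ (0,1) with Î(x, r_x) = 0; (3) the map x ↦ r_x is decreasing on (0, π); and (4) 1/2 < r_x < 1/√2 for all x ∈ (0, π). -/

import Mathlib

open Set Filter

/-- `Î(x,t) = log( sin(x(1−t)/2)·sin(x(1+t)/2) / sin(xt/2)² )`. -/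
noncomputable def Ihat (x t : ℝ) : ℝ :=
  Real.log (Real.sin (x * (1 - t) / 2) * Real.sin (x * (1 + t) / 2) / Real.sin (x * t / 2) ^ 2)

/-!
Put `y = x / 2` and `σ = sin (t y) / sin y ∈ (0, 1)`. Since
`sin (a - b) sin (a + b) = sin² a - sin² b`, we have `Î(x, t) = log (1 / σ² - 1)`, a strictly
decreasing function of `σ` that vanishes at `σ = 1/√2`. The ratio `σ` increases in `t` because
`sin` does on `[0, π/2]`, and in `y` because its derivative has the sign of `t tan y - tan (t y)`,
which is positive by strict convexity of `tan`. Hence `Î` is strictly decreasing in both variables;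
this gives the monotonicity in (1), uniqueness in (2), and (3). Finally
`Î(x, 1/2) > 0 > Î(x, 1/√2)`, which gives existence by the intermediate value theorem and (4):
`σ(1/2, y) = 1 / (2 cos (y/2)) < 1/√2`, and `σ(1/√2, y) > 1/√2` by strict concavity of `sin`.
-/

open Real Topology

lemma sin_sub_mul_sin_add (a b : ℝ) : sin (a - b) * sin (a + b) = sin a ^ 2 - sin b ^ 2 := by
  rw [sin_sub, sin_add]
  linear_combination sin a ^ 2 * sin_sq_add_cos_sq b - sin b ^ 2 * sin_sq_add_cos_sq a

lemma strictConvexOn_tan : StrictConvexOn ℝ (Ico 0 (π / 2)) tan := by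
  refine StrictMonoOn.strictConvexOn_of_deriv (convex_Ico _ _)
    (continuousOn_tan_Ioo.mono fun y hy => ⟨by linarith [pi_pos, hy.1], hy.2⟩) ?_
  rw [interior_Ico]
  intro a ha b hb hab
  have hcos : 0 < cos b := cos_pos_of_mem_Ioo ⟨by linarith [pi_pos, hb.1], hb.2⟩
  simp only [deriv_tan]
  gcongr
  exact cos_lt_cos_of_nonneg_of_le_pi_div_two ha.1.le hb.2.le hab

lemma tan_mul_lt_mul_tan {r y : ℝ} (hr₀ : 0 < r) (hr₁ : r < 1) (hy₀ : 0 < y) (hy : y < π / 2) :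
    tan (r * y) < r * tan y := by
  simpa using strictConvexOn_tan.2 ⟨le_rfl, by positivity⟩ ⟨hy₀.le, hy⟩ hy₀.ne
    (sub_pos.2 hr₁) hr₀ (sub_add_cancel 1 r)

lemma mul_sin_lt_sin_mul {c u : ℝ} (hc₀ : 0 < c) (hc₁ : c < 1) (hu₀ : 0 < u) (hu : u ≤ π) :
    c * sin u < sin (c * u) := by
  simpa using strictConcaveOn_sin_Icc.2 ⟨le_rfl, pi_pos.le⟩ ⟨hu₀.le, hu⟩ hu₀.ne
    (sub_pos.2 hc₁) hc₀ (sub_add_cancel 1 c)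

lemma strictMonoOn_sin_mul_div_sin {r : ℝ} (hr₀ : 0 < r) (hr₁ : r < 1) :
    StrictMonoOn (fun y => sin (r * y) / sin y) (Ioo 0 (π / 2)) := by
  have hsin : ∀ y ∈ Ioo 0 (π / 2), 0 < sin y := fun y hy =>
    sin_pos_of_pos_of_lt_pi hy.1 (by linarith [hy.2, pi_pos])
  refine strictMonoOn_of_deriv_pos (convex_Ioo _ _)
    (ContinuousOn.div (by fun_prop) (by fun_prop) fun y hy => (hsin y hy).ne') ?_
  rw [interior_Ioo]
  intro y hy
  have hcos : 0 < cos y := cos_pos_of_mem_Ioo ⟨by linarith [hy.1, pi_pos], hy.2⟩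
  have hcos' : 0 < cos (r * y) :=
    cos_pos_of_mem_Ioo ⟨by nlinarith [hy.1, pi_pos], by nlinarith [hy.1, hy.2]⟩
  have htan := tan_mul_lt_mul_tan hr₀ hr₁ hy.1 hy.2
  rw [tan_eq_sin_div_cos, tan_eq_sin_div_cos, ← mul_div_assoc,
    div_lt_div_iff₀ hcos' hcos] at htan
  have hderiv : HasDerivAt (fun y => sin (r * y) / sin y)
      ((cos (r * y) * r * sin y - sin (r * y) * cos y) / sin y ^ 2) y := by
    simpa [mul_comm] using
      (hasDerivAt_mul_const r).sin.fun_div (hasDerivAt_sin y) (hsin y hy).ne'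
  rw [hderiv.deriv]
  exact div_pos (by nlinarith) (pow_pos (hsin y hy) 2)

lemma sin_mul_div_sin_mem_Ioo {t y : ℝ} (ht : t ∈ Ioo 0 1) (hy : y ∈ Ioo 0 (π / 2)) :
    sin (t * y) / sin y ∈ Ioo 0 1 := by
  have hty : t * y < y := mul_lt_of_lt_one_left hy.1 ht.2
  have hsin : 0 < sin (t * y) :=
    sin_pos_of_pos_of_lt_pi (mul_pos ht.1 hy.1) (by linarith [hy.2, pi_pos])
  have hlt : sin (t * y) < sin y :=
    sin_lt_sin_of_lt_of_le_pi_div_two (by linarith [mul_pos ht.1 hy.1, pi_pos]) hy.2.le hty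
  exact ⟨div_pos hsin (hsin.trans hlt), (div_lt_one (hsin.trans hlt)).2 hlt⟩

lemma one_div_sqrt_two_mem_Ioo : 1 / √2 ∈ Ioo (0 : ℝ) 1 :=
  ⟨by positivity, by rw [div_lt_one (by positivity)]; exact one_lt_sqrt_two⟩

lemma sin_one_half_mul_div_sin_lt {y : ℝ} (hy : y ∈ Ioo 0 (π / 2)) :
    sin (1 / 2 * y) / sin y < 1 / √2 := by
  have hs : 0 < sin (1 / 2 * y) :=
    sin_pos_of_pos_of_lt_pi (by linarith [hy.1]) (by linarith [hy.2, pi_pos])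
  have hc : √2 / 2 < cos (1 / 2 * y) := cos_pi_div_four ▸
    cos_lt_cos_of_nonneg_of_le_pi_div_two (by linarith [hy.1]) (by linarith [pi_pos])
      (by linarith [hy.2])
  have hdouble : sin y = 2 * sin (1 / 2 * y) * cos (1 / 2 * y) := by
    rw [← sin_two_mul]; ring_nf
  rw [div_lt_div_iff₀ (sin_pos_of_pos_of_lt_pi hy.1 (by linarith [hy.2, pi_pos])) (by positivity),
    hdouble]
  nlinarith [sq_sqrt (show (0 : ℝ) ≤ 2 by norm_num), mul_lt_mul_of_pos_left hc hs]

lemma one_div_sqrt_two_lt_sin_mul_div_sin {y : ℝ} (hy : y ∈ Ioo 0 π) :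
    1 / √2 < sin (1 / √2 * y) / sin y := by
  rw [lt_div_iff₀ (sin_pos_of_pos_of_lt_pi hy.1 hy.2)]
  exact mul_sin_lt_sin_mul one_div_sqrt_two_mem_Ioo.1 one_div_sqrt_two_mem_Ioo.2 hy.1 hy.2.le

lemma strictAntiOn_log_one_div_sq_sub_one :
    StrictAntiOn (fun s : ℝ => log (1 / s ^ 2 - 1)) (Ioo 0 1) := by
  intro a ha b hb hab
  have hb₁ : 1 < 1 / b ^ 2 := one_lt_one_div (pow_pos hb.1 2) (pow_lt_one₀ hb.1.le hb.2 two_ne_zero)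
  refine log_lt_log (by linarith) (sub_lt_sub_right ?_ 1)
  exact one_div_lt_one_div_of_lt (pow_pos ha.1 2) (pow_lt_pow_left₀ hab ha.1.le two_ne_zero)

lemma log_one_div_sq_sub_one_one_div_sqrt_two : log (1 / (1 / √2) ^ 2 - 1) = 0 := by
  norm_num

lemma half_mem_Ioo {x : ℝ} (hx : x ∈ Ioo 0 π) : x / 2 ∈ Ioo 0 (π / 2) :=
  ⟨half_pos hx.1, by linarith [hx.2]⟩

lemma sin_mul_div_two_pos {x t : ℝ} (hx : x ∈ Ioo 0 π) (ht : t ∈ Ioo 0 2) :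
    0 < sin (x * t / 2) :=
  sin_pos_of_pos_of_lt_pi (div_pos (mul_pos hx.1 ht.1) two_pos)
    (by nlinarith [hx.1, hx.2, ht.1, ht.2])

lemma Ihat_arg_pos {x t : ℝ} (hx : x ∈ Ioo 0 π) (ht : t ∈ Ioo 0 1) :
    0 < sin (x * (1 - t) / 2) * sin (x * (1 + t) / 2) / sin (x * t / 2) ^ 2 := by
  have h₁ := sin_mul_div_two_pos hx (t := 1 - t) ⟨by linarith [ht.2], by linarith [ht.1]⟩
  have h₂ := sin_mul_div_two_pos hx (t := 1 + t) ⟨by linarith [ht.1], by linarith [ht.2]⟩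
  have h₃ := sin_mul_div_two_pos hx ⟨ht.1, by linarith [ht.2]⟩
  positivity

lemma Ihat_eq_log_sin_mul_div_sin {x t : ℝ} (hx : x ∈ Ioo 0 π) (ht : t ∈ Ioo 0 1) :
    Ihat x t = log (1 / (sin (t * (x / 2)) / sin (x / 2)) ^ 2 - 1) := by
  have hs : sin (x * t / 2) ≠ 0 := (sin_mul_div_two_pos hx ⟨ht.1, by linarith [ht.2]⟩).ne'
  rw [Ihat, show x * (1 - t) / 2 = x / 2 - t * (x / 2) by ring,
    show x * (1 + t) / 2 = x / 2 + t * (x / 2) by ring, sin_sub_mul_sin_add,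
    show t * (x / 2) = x * t / 2 by ring, sub_div, div_self (pow_ne_zero 2 hs), div_pow,
    one_div_div]

lemma continuousOn_Ihat {x : ℝ} (hx : x ∈ Ioo 0 π) : ContinuousOn (Ihat x) (Ioo 0 1) := by
  refine ContinuousOn.log (ContinuousOn.div (by fun_prop) (by fun_prop) fun t ht => ?_)
    fun t ht => (Ihat_arg_pos hx ht).ne'
  exact (pow_pos (sin_mul_div_two_pos hx ⟨ht.1, by linarith [ht.2]⟩) 2).ne'

lemma strictAntiOn_Ihat {x : ℝ} (hx : x ∈ Ioo 0 π) : StrictAntiOn (Ihat x) (Ioo 0 1) := by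
  intro a ha b hb hab
  have hy := half_mem_Ioo hx
  rw [Ihat_eq_log_sin_mul_div_sin hx ha, Ihat_eq_log_sin_mul_div_sin hx hb]
  refine strictAntiOn_log_one_div_sq_sub_one (sin_mul_div_sin_mem_Ioo ha hy)
    (sin_mul_div_sin_mem_Ioo hb hy) (div_lt_div_of_pos_right ?_
      (sin_pos_of_pos_of_lt_pi hy.1 (by linarith [hy.2, pi_pos])))
  exact sin_lt_sin_of_lt_of_le_pi_div_two (by nlinarith [ha.1, hy.1, pi_pos])
    (by nlinarith [hb.2, hy.1, hy.2]) (by nlinarith [hy.1])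

lemma strictAntiOn_flip_Ihat {t : ℝ} (ht : t ∈ Ioo 0 1) :
    StrictAntiOn (flip Ihat t) (Ioo 0 π) := by
  intro a ha b hb hab
  show Ihat b t < Ihat a t
  rw [Ihat_eq_log_sin_mul_div_sin ha ht, Ihat_eq_log_sin_mul_div_sin hb ht]
  exact strictAntiOn_log_one_div_sq_sub_one (sin_mul_div_sin_mem_Ioo ht (half_mem_Ioo ha))
    (sin_mul_div_sin_mem_Ioo ht (half_mem_Ioo hb))
    (strictMonoOn_sin_mul_div_sin ht.1 ht.2 (half_mem_Ioo ha) (half_mem_Ioo hb) (by linarith))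

lemma tendsto_Ihat_nhdsGT_zero {x : ℝ} (hx : x ∈ Ioo 0 π) :
    Tendsto (Ihat x) (𝓝[>] 0) atTop := by
  have hnum : Tendsto (fun t => sin (x * (1 - t) / 2) * sin (x * (1 + t) / 2)) (𝓝[>] 0)
      (𝓝 (sin (x / 2) * sin (x / 2))) := by
    simpa using ((by fun_prop : Continuous fun t => sin (x * (1 - t) / 2) * sin (x * (1 + t) / 2)
      ).tendsto 0).mono_left nhdsWithin_le_nhds
  have hden : Tendsto (fun t => sin (x * t / 2) ^ 2) (𝓝[>] 0) (𝓝[>] 0) := by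
    refine tendsto_nhdsWithin_iff.2 ⟨?_, ?_⟩
    · simpa using ((by fun_prop : Continuous fun t => sin (x * t / 2) ^ 2).tendsto 0).mono_left
        nhdsWithin_le_nhds
    · filter_upwards [Ioo_mem_nhdsGT two_pos] with t ht using pow_pos (sin_mul_div_two_pos hx ht) 2
  have hS : 0 < sin (x / 2) := by simpa using sin_mul_div_two_pos hx ⟨one_pos, one_lt_two⟩
  exact tendsto_log_atTop.comp (hnum.pos_mul_atTop (by positivity) hden.inv_tendsto_nhdsGT_zero)

lemma tendsto_Ihat_nhdsLT_one {x : ℝ} (hx : x ∈ Ioo 0 π) : Tendsto (Ihat x) (𝓝[<] 1) atBot := by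
  refine tendsto_log_nhdsGT_zero.comp (tendsto_nhdsWithin_iff.2 ⟨?_, ?_⟩)
  · have hS := sin_mul_div_two_pos hx ⟨one_pos, one_lt_two⟩
    have : ContinuousAt
        (fun t => sin (x * (1 - t) / 2) * sin (x * (1 + t) / 2) / sin (x * t / 2) ^ 2) 1 :=
      ContinuousAt.div (by fun_prop) (by fun_prop) (pow_pos hS 2).ne'
    simpa using this.tendsto.mono_left nhdsWithin_le_nhds
  · filter_upwards [Ioo_mem_nhdsLT one_pos] with t ht using Ihat_arg_pos hx ht

lemma Ihat_one_half_pos {x : ℝ} (hx : x ∈ Ioo 0 π) : 0 < Ihat x (1 / 2) := by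
  have ht : (1 / 2 : ℝ) ∈ Ioo 0 1 := ⟨by norm_num, by norm_num⟩
  rw [Ihat_eq_log_sin_mul_div_sin hx ht, ← log_one_div_sq_sub_one_one_div_sqrt_two]
  exact strictAntiOn_log_one_div_sq_sub_one (sin_mul_div_sin_mem_Ioo ht (half_mem_Ioo hx))
    one_div_sqrt_two_mem_Ioo (sin_one_half_mul_div_sin_lt (half_mem_Ioo hx))

lemma Ihat_one_div_sqrt_two_neg {x : ℝ} (hx : x ∈ Ioo 0 π) : Ihat x (1 / √2) < 0 := by
  have hy := half_mem_Ioo hx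
  rw [Ihat_eq_log_sin_mul_div_sin hx one_div_sqrt_two_mem_Ioo,
    ← log_one_div_sq_sub_one_one_div_sqrt_two]
  exact strictAntiOn_log_one_div_sq_sub_one one_div_sqrt_two_mem_Ioo
    (sin_mul_div_sin_mem_Ioo one_div_sqrt_two_mem_Ioo hy)
    (one_div_sqrt_two_lt_sin_mul_div_sin ⟨hy.1, by linarith [hy.2, pi_pos]⟩)

lemma exists_Ihat_eq_zero {x : ℝ} (hx : x ∈ Ioo 0 π) : ∃ r ∈ Ioo (0 : ℝ) 1, Ihat x r = 0 := by
  have hle : 1 / 2 ≤ 1 / √2 := by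
    gcongr
    nlinarith [sq_sqrt (show (0 : ℝ) ≤ 2 by norm_num), sqrt_nonneg 2]
  obtain ⟨r, hr, hr₀⟩ := intermediate_value_Icc' hle
    ((continuousOn_Ihat hx).mono (Icc_subset_Ioo (by norm_num) one_div_sqrt_two_mem_Ioo.2))
    ⟨(Ihat_one_div_sqrt_two_neg hx).le, (Ihat_one_half_pos hx).le⟩
  exact ⟨r, ⟨by linarith [hr.1], hr.2.trans_lt one_div_sqrt_two_mem_Ioo.2⟩, hr₀⟩

/-- For each `x ∈ (0,π)`: `t ↦ Î(x,t)` is continuous and strictly decreasing on `(0,1)` with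
limits `+∞` at `0⁺` and `−∞` at `1⁻`; it has a unique root `r_x ∈ (0,1)`; the root is
decreasing in `x`; and `1/2 < r_x < 1/√2`. -/
theorem stmt_5 :
    (∀ x ∈ Ioo 0 Real.pi,
      ContinuousOn (Ihat x) (Ioo 0 1) ∧ StrictAntiOn (Ihat x) (Ioo 0 1) ∧
      Tendsto (Ihat x) (nhdsWithin 0 (Ioi 0)) atTop ∧
      Tendsto (Ihat x) (nhdsWithin 1 (Iio 1)) atBot) ∧
    (∀ x ∈ Ioo 0 Real.pi, ∃! r, r ∈ Ioo (0:ℝ) 1 ∧ Ihat x r = 0) ∧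
    (∀ x₁ ∈ Ioo 0 Real.pi, ∀ x₂ ∈ Ioo 0 Real.pi, x₁ ≤ x₂ →
      ∀ r₁ ∈ Ioo (0:ℝ) 1, ∀ r₂ ∈ Ioo (0:ℝ) 1,
        Ihat x₁ r₁ = 0 → Ihat x₂ r₂ = 0 → r₂ ≤ r₁) ∧
    (∀ x ∈ Ioo 0 Real.pi, ∀ r ∈ Ioo (0:ℝ) 1, Ihat x r = 0 →
      1/2 < r ∧ r < 1 / Real.sqrt 2) := by
  refine ⟨fun x hx => ⟨continuousOn_Ihat hx, strictAntiOn_Ihat hx, tendsto_Ihat_nhdsGT_zero hx,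
    tendsto_Ihat_nhdsLT_one hx⟩, fun x hx => ?_, ?_, fun x hx r hr h => ⟨?_, ?_⟩⟩
  · obtain ⟨r, hr, h⟩ := exists_Ihat_eq_zero hx
    exact ⟨r, ⟨hr, h⟩, fun r' ⟨hr', h'⟩ => (strictAntiOn_Ihat hx).injOn hr' hr (h'.trans h.symm)⟩
  · intro x₁ hx₁ x₂ hx₂ hx r₁ hr₁ r₂ hr₂ h₁ h₂
    rw [← (strictAntiOn_Ihat hx₂).le_iff_ge hr₁ hr₂]
    calc Ihat x₂ r₁ ≤ Ihat x₁ r₁ := (strictAntiOn_flip_Ihat hr₁).antitoneOn hx₁ hx₂ hx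
      _ = Ihat x₂ r₂ := h₁.trans h₂.symm
  · rw [← (strictAntiOn_Ihat hx).lt_iff_gt hr ⟨by norm_num, by norm_num⟩, h]
    exact Ihat_one_half_pos hx
  · rw [← (strictAntiOn_Ihat hx).lt_iff_gt one_div_sqrt_two_mem_Ioo hr, h]
    exact Ihat_one_div_sqrt_two_neg hx
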